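/- Let m ≥ 3, let h be a symmetric invertible real m×m matrix, k = h², and define R(Ω) = 2·h·Ω·h for skew-symmetric Ω. If h̃ is any real m×m matrix satisfying h̃·k⁻¹·R(Ω) = 2·Ω·h̃ for all skew-symmetric Ω, then h̃ = λ·h for some real λ. -/

import Mathlib

/-!
Put `A = h̃ h⁻¹`. Since `k⁻¹ = h⁻¹ h⁻¹`, the equation reads `A Ω h = Ω A h`, so `A` commutes with
every skew-symmetric matrix. Testing against `E_ij - E_ji` shows that the diagonal of `A` is
constant and, using a third index `l ∉ {i, j}` (this is where `m ≥ 3` enters), that `A` has no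
off-diagonal entries. Hence `A = λ • 1` and `h̃ = λ • h`.
-/

open Matrix

namespace Matrix

variable {n α : Type*} [DecidableEq n]

lemma transpose_single_sub_single [Ring α] (i j : n) :
    (single i j (1 : α) - single j i 1)ᵀ = -(single i j 1 - single j i 1) := by
  simp [transpose_single]

variable [Fintype n]

section Ring

variable [Ring α] {A : Matrix n n α} {i j : n}

lemma diag_eq_of_commute_single_sub_single (hij : i ≠ j)
    (hA : Commute A (single i j 1 - single j i 1)) : A i i = A j j := by
  simpa [mul_sub, sub_mul, hij, hij.symm] using congr_fun₂ hA i j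

lemma apply_eq_zero_of_commute_single_sub_single {p : n} (hpi : p ≠ i) (hjp : j ≠ p) (hji : j ≠ i)
    (hA : Commute A (single i j 1 - single j i 1)) : A p i = 0 := by
  simpa [mul_sub, sub_mul, hpi, hjp, hji, hji.symm, single_mul_apply_of_ne _ _ _ _ _ hjp.symm]
    using congr_fun₂ hA p j

theorem mem_range_scalar_of_commute_skew (hn : 3 ≤ Fintype.card n)
    (hA : ∀ Ω : Matrix n n α, Ωᵀ = -Ω → Commute A Ω) : A ∈ Set.range (scalar n) := by
  have hE (i j : n) : Commute A (single i j 1 - single j i 1) :=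
    hA _ (transpose_single_sub_single i j)
  have h3 : 3 ≤ ENat.card n := by simpa [ENat.card_eq_coe_fintype_card] using hn
  obtain ⟨i₀⟩ : Nonempty n := Fintype.card_pos_iff.mp (by omega)
  refine ⟨A i₀ i₀, Matrix.ext fun p q => ?_⟩
  obtain rfl | hpq := eq_or_ne p q
  · obtain rfl | hp := eq_or_ne i₀ p
    · simp
    · simp [diag_eq_of_commute_single_sub_single hp (hE i₀ p)]
  · obtain ⟨l, hlp, hlq⟩ := ENat.exists_ne_ne_of_three_le h3 p q
    simp [diagonal_apply_ne _ hpq,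
      apply_eq_zero_of_commute_single_sub_single hpq hlp hlq (hE q l)]

end Ring

lemma commute_mul_inv_of_mul_inv_sq_mul_eq [CommRing α] {h X Ω : Matrix n n α} (hh : IsUnit h)
    (hX : X * (h ^ 2)⁻¹ * (h * Ω * h) = Ω * X) : Commute (X * h⁻¹) Ω := by
  have hdet := (isUnit_iff_isUnit_det h).mp hh
  have hXΩh : X * h⁻¹ * Ω * h = Ω * X := by
    rw [← hX, sq, mul_inv_rev]
    simp only [mul_assoc, nonsing_inv_mul_cancel_left _ _ hdet]
  calc X * h⁻¹ * Ω = X * h⁻¹ * Ω * h * h⁻¹ := (mul_nonsing_inv_cancel_right _ _ hdet).symm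
    _ = Ω * (X * h⁻¹) := by rw [hXΩh, mul_assoc]

end Matrix

theorem stmt_8_general {m : ℕ} (hm : 3 ≤ m) (h : Matrix (Fin m) (Fin m) ℝ)
    (hinv : IsUnit h)
    (k : Matrix (Fin m) (Fin m) ℝ) (hk : k = h ^ 2)
    (R : Matrix (Fin m) (Fin m) ℝ → Matrix (Fin m) (Fin m) ℝ)
    (hR : ∀ Ω, R Ω = (2 : ℝ) • (h * Ω * h))
    (htilde : Matrix (Fin m) (Fin m) ℝ)
    (hsol : ∀ Ω : Matrix (Fin m) (Fin m) ℝ, Ωᵀ = -Ω →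
      htilde * k⁻¹ * R Ω = (2 : ℝ) • (Ω * htilde)) :
    ∃ l : ℝ, htilde = l • h := by
  have hcomm (Ω : Matrix (Fin m) (Fin m) ℝ) (hΩ : Ωᵀ = -Ω) : Commute (htilde * h⁻¹) Ω := by
    have hsolΩ := hsol Ω hΩ
    rw [hk, hR, mul_smul_comm] at hsolΩ
    exact commute_mul_inv_of_mul_inv_sq_mul_eq hinv (smul_right_injective _ two_ne_zero hsolΩ)
  obtain ⟨l, hl⟩ := mem_range_scalar_of_commute_skew (by simpa using hm) hcomm
  refine ⟨l, ?_⟩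
  rw [← nonsing_inv_mul_cancel_right h htilde ((isUnit_iff_isUnit_det h).mp hinv), ← hl,
    scalar_apply, smul_eq_diagonal_mul]

theorem stmt_8 {m : ℕ} (hm : 3 ≤ m) (h : Matrix (Fin m) (Fin m) ℝ)
    (hsym : h.IsSymm) (hinv : IsUnit h)
    (k : Matrix (Fin m) (Fin m) ℝ) (hk : k = h ^ 2)
    (R : Matrix (Fin m) (Fin m) ℝ → Matrix (Fin m) (Fin m) ℝ)
    (hR : ∀ Ω, R Ω = (2 : ℝ) • (h * Ω * h))
    (htilde : Matrix (Fin m) (Fin m) ℝ)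
    (hsol : ∀ Ω : Matrix (Fin m) (Fin m) ℝ, Ωᵀ = -Ω →
      htilde * k⁻¹ * R Ω = (2 : ℝ) • (Ω * htilde)) :
    ∃ l : ℝ, htilde = l • h :=
  stmt_8_general hm h hinv k hk R hR htilde hsol
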